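/- arXiv:2103.09287 — 8 statements merged into one kernel-verified Lean document; each statement's English description precedes it below -/
import Mathlib

section
/- Let α > 0, let f : ℝ → ℝ be differentiable and α-strongly convex, let x < y, and set ε = α(y − x)²/4. Suppose F_x, F_y ∈ ℝ satisfy |F_x − f(x)| ≤ ε/2 and |F_y − f(y)| ≤ ε/2, and define the estimated secant g = (F_y − F_x + ε)/(y − x). Then f'(x) ≤ (f(y) − f(x))/(y − x) ≤ g ≤ f'(y). -/
/-!
Strong convexity makes the secant slope exceed `f'(x)` by `α(y - x)/2`, and `f'(y)` exceed the
slope by the same margin. The two measurement errors move `F_y - F_x` by at most `ε`, so adding `ε`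
makes the error one-sided, at most `2ε = α(y - x)²/2`, i.e. at most `α(y - x)/2` on the slope:
exactly the margin left below `f'(y)`.
-/

section StrongConvexity

variable {f : ℝ → ℝ} {α x y : ℝ}

theorem deriv_add_mul_le_slope (hsc : f y ≥ f x + deriv f x * (y - x) + α / 2 * (y - x) ^ 2)
    (hxy : x < y) : deriv f x + α / 2 * (y - x) ≤ (f y - f x) / (y - x) := by
  rw [le_div_iff₀ (sub_pos.2 hxy)]
  linear_combination hsc

theorem slope_add_mul_le_deriv (hsc : f x ≥ f y + deriv f y * (x - y) + α / 2 * (x - y) ^ 2)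
    (hxy : x < y) : (f y - f x) / (y - x) + α / 2 * (y - x) ≤ deriv f y := by
  rw [div_add' _ _ _ (sub_pos.2 hxy).ne', div_le_iff₀ (sub_pos.2 hxy)]
  linear_combination hsc

end StrongConvexity

theorem sub_add_mem_Icc_of_abs_sub_le {a b a' b' ε : ℝ} (ha : |a' - a| ≤ ε / 2)
    (hb : |b' - b| ≤ ε / 2) : b' - a' + ε ∈ Set.Icc (b - a) (b - a + 2 * ε) := by
  rw [abs_le] at ha hb
  constructor <;> linarith

theorem conservative_secant_estimate_general
    (α : ℝ) (hα : 0 < α)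
    (f : ℝ → ℝ)
    (hsc : ∀ x y : ℝ, f y ≥ f x + deriv f x * (y - x) + α / 2 * (y - x) ^ 2)
    (x y : ℝ) (hxy : x < y)
    (ε : ℝ) (hε : ε = α * (y - x) ^ 2 / 4)
    (Fx Fy : ℝ) (hFx : |Fx - f x| ≤ ε / 2) (hFy : |Fy - f y| ≤ ε / 2)
    (g : ℝ) (hg : g = (Fy - Fx + ε) / (y - x)) :
    deriv f x ≤ (f y - f x) / (y - x) ∧
    (f y - f x) / (y - x) ≤ g ∧
    g ≤ deriv f y := by
  have hd : 0 < y - x := sub_pos.2 hxy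
  have hmargin : 2 * ε / (y - x) = α / 2 * (y - x) := by
    rw [hε]
    field_simp
    ring
  obtain ⟨hlo, hhi⟩ := sub_add_mem_Icc_of_abs_sub_le hFx hFy
  have hg_hi : g ≤ (f y - f x) / (y - x) + α / 2 * (y - x) := by
    rw [hg, ← hmargin, ← add_div]
    exact div_le_div_of_nonneg_right hhi hd.le
  refine ⟨?_, hg ▸ div_le_div_of_nonneg_right hlo hd.le,
    hg_hi.trans (slope_add_mul_le_deriv (hsc y x) hxy)⟩
  refine le_trans ?_ (deriv_add_mul_le_slope (hsc x y) hxy)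
  exact le_add_of_nonneg_right (by positivity)

/-- Deterministic version of the conservative secant estimate:
if `F_x, F_y` approximate `f(x), f(y)` to within `ε/2` where `ε = α(y-x)²/4`,
then the estimated secant `g = (F_y - F_x + ε)/(y - x)` satisfies
`f'(x) ≤ (f(y) - f(x))/(y - x) ≤ g ≤ f'(y)`. -/
theorem conservative_secant_estimate
    (α : ℝ) (hα : 0 < α)
    (f : ℝ → ℝ) (hf : Differentiable ℝ f)
    (hsc : ∀ x y : ℝ, f y ≥ f x + deriv f x * (y - x) + α / 2 * (y - x) ^ 2)
    (x y : ℝ) (hxy : x < y)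
    (ε : ℝ) (hε : ε = α * (y - x) ^ 2 / 4)
    (Fx Fy : ℝ) (hFx : |Fx - f x| ≤ ε / 2) (hFy : |Fy - f y| ≤ ε / 2)
    (g : ℝ) (hg : g = (Fy - Fx + ε) / (y - x)) :
    deriv f x ≤ (f y - f x) / (y - x) ∧
    (f y - f x) / (y - x) ≤ g ∧
    g ≤ deriv f y :=
  conservative_secant_estimate_general α hα f hsc x y hxy ε hε Fx Fy hFx hFy g hg
end

section
/- Let α > 0, let f : ℝ → ℝ be differentiable and α-strongly convex, let x < y, let p ∈ (0,1), and let n be a natural number with n ≥ 32·log(2/p)/(α²(y − x)⁴). On a probability space, let ε_1, …, ε_n, ε'_1, …, ε'_n be 2n independent, identically distributed real random variables with mean zero, each supported in an interval of length at most 1. Define the sample averages F_x = f(x) + (1/n)·Σ_{i=1}^n ε_i and F_y = f(y) + (1/n)·Σ_{i=1}^n ε'_i, and the estimated secant g = (F_y − F_x + α(y − x)²/4)/(y − x). Then with probability at least (1 − p)², we have f'(x) ≤ (f(y) − f(x))/(y − x) ≤ g ≤ f'(y). -/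
/-!
The noise difference `S = ∑ ε'ᵢ - ∑ εᵢ` is a sum of `2n` independent centred variables of range
at most `1`, so by Hoeffding's lemma it is sub-Gaussian with variance proxy `n / 2`. Hence
`|S| < n s` with `s = α (y - x)² / 4` except on an event of probability at most
`2 exp (-n s²) ≤ p² / 2`, and `1 - p² / 2 ≥ (1 - p)²`. On the good event `g` exceeds the secant
by `(S / n + s) / (y - x) ∈ [0, α (y - x) / 2]`, while strong convexity at `y` puts `f' y` at
least `α (y - x) / 2` above the secant, and strong convexity at `x` puts `f' x` below it.
-/

open MeasureTheory ProbabilityTheory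
open Real NNReal

namespace ProbabilityTheory

variable {Ω : Type*} [MeasurableSpace Ω] {μ : Measure Ω} {X : Ω → ℝ} {c : ℝ≥0}

namespace HasSubgaussianMGF

lemma mono (h : HasSubgaussianMGF X c μ) {c' : ℝ≥0} (hc : c ≤ c') :
    HasSubgaussianMGF X c' μ where
  integrable_exp_mul := h.integrable_exp_mul
  mgf_le t := (h.mgf_le t).trans <| exp_le_exp.2 <| by gcongr

lemma measureReal_abs_ge_le (h : HasSubgaussianMGF X c μ) {ε : ℝ} (hε : 0 ≤ ε) :
    μ.real {ω | ε ≤ |X ω|} ≤ 2 * exp (-ε ^ 2 / (2 * c)) := by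
  have hunion : {ω | ε ≤ |X ω|} = {ω | ε ≤ X ω} ∪ {ω | ε ≤ (-X) ω} := by
    ext ω; simp only [le_abs, Set.mem_union, Set.mem_ofPred_eq, Pi.neg_apply]
  calc μ.real {ω | ε ≤ |X ω|}
      ≤ μ.real {ω | ε ≤ X ω} + μ.real {ω | ε ≤ (-X) ω} := by
        rw [hunion]; exact measureReal_union_le _ _
    _ ≤ exp (-ε ^ 2 / (2 * c)) + exp (-ε ^ 2 / (2 * c)) :=
        add_le_add (h.measure_ge_le hε) (h.neg.measure_ge_le hε)
    _ = 2 * exp (-ε ^ 2 / (2 * c)) := by ring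

lemma one_sub_le_measureReal_abs_lt [IsProbabilityMeasure μ] (h : HasSubgaussianMGF X c μ)
    {ε : ℝ} (hε : 0 ≤ ε) :
    1 - 2 * exp (-ε ^ 2 / (2 * c)) ≤ μ.real {ω | |X ω| < ε} := by
  have hcompl : {ω | |X ω| < ε} = {ω | ε ≤ |X ω|}ᶜ := by
    ext ω; simp only [Set.mem_compl_iff, Set.mem_ofPred_eq, not_le]
  rw [hcompl, probReal_compl_eq_one_sub₀
    (nullMeasurableSet_le aemeasurable_const h.aemeasurable.abs)]
  linarith [h.measureReal_abs_ge_le hε]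

lemma sum_sub_sum_of_iIndepFun {ι κ : Type*} [Fintype ι] [Fintype κ] {e : ι ⊕ κ → Ω → ℝ}
    (hindep : iIndepFun e μ) (h : ∀ i, HasSubgaussianMGF (e i) c μ) :
    HasSubgaussianMGF (fun ω ↦ ∑ j, e (.inr j) ω - ∑ i, e (.inl i) ω)
      ((Fintype.card ι + Fintype.card κ) * c) μ := by
  set sign : ι ⊕ κ → ℝ → ℝ := Sum.elim (fun _ ↦ Neg.neg) (fun _ ↦ id)
  have hsigned : HasSubgaussianMGF (fun ω ↦ ∑ i, sign i (e i ω)) (∑ _ : ι ⊕ κ, c) μ := by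
    refine sum_of_iIndepFun (hindep.comp sign fun i ↦ ?_) fun i _ ↦ ?_
    · cases i
      · exact measurable_neg
      · exact measurable_id
    · cases i
      · exact (h _).neg
      · exact h _
  convert hsigned using 1
  · ext ω
    simp [sign, Fintype.sum_sum_type, sub_eq_neg_add]
  · simp [Fintype.card_sum, add_mul]

end HasSubgaussianMGF

lemma hasSubgaussianMGF_of_mem_Icc_of_integral_eq_zero_of_sub_le [IsProbabilityMeasure μ]
    (hX : Measurable X) {a b : ℝ} {d : ℝ≥0} (hmem : ∀ ω, X ω ∈ Set.Icc a b) (hab : b - a ≤ d)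
    (hmean : μ[X] = 0) :
    HasSubgaussianMGF X ((d / 2) ^ 2) μ := by
  refine (hasSubgaussianMGF_of_mem_Icc_of_integral_eq_zero hX.aemeasurable
    (ae_of_all _ hmem) hmean).mono ?_
  obtain ⟨ω⟩ : Nonempty Ω := nonempty_of_isProbabilityMeasure μ
  have hab' : 0 ≤ b - a := sub_nonneg.2 ((hmem ω).1.trans (hmem ω).2)
  gcongr
  rwa [← NNReal.coe_le_coe, coe_nnnorm, Real.norm_of_nonneg hab']

end ProbabilityTheory

lemma secant_bounds_of_strongly_convex {f f' : ℝ → ℝ} {α : ℝ}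
    (hsc : ∀ x y : ℝ, f y ≥ f x + f' x * (y - x) + α / 2 * (y - x) ^ 2)
    {x y u v : ℝ} (hxy : x < y) (huv : |v - u| ≤ α * (y - x) ^ 2 / 4) :
    f' x ≤ (f y - f x) / (y - x) ∧
      (f y - f x) / (y - x) ≤ (f y + v - (f x + u) + α * (y - x) ^ 2 / 4) / (y - x) ∧
      (f y + v - (f x + u) + α * (y - x) ^ 2 / 4) / (y - x) ≤ f' y := by
  have hd : 0 < y - x := sub_pos.2 hxy
  obtain ⟨huv₁, huv₂⟩ := abs_le.1 huv
  have hx := hsc x y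
  have hy := hsc y x
  refine ⟨?_, ?_, ?_⟩
  · rw [le_div_iff₀ hd]; nlinarith [abs_nonneg (v - u)]
  · gcongr; linarith
  · rw [div_le_iff₀ hd]; nlinarith

lemma exp_neg_le_sq_div_four {p t : ℝ} (hp : 0 < p) (ht : 2 * log (2 / p) ≤ t) :
    exp (-t) ≤ p ^ 2 / 4 :=
  calc exp (-t) ≤ exp (-(2 * log (2 / p))) := exp_le_exp.2 (neg_le_neg ht)
    _ = p ^ 2 / 4 := by
      rw [show -(2 * log (2 / p)) = log ((p / 2) ^ 2) by
        rw [log_pow, ← inv_div, log_inv]; push_cast; ring, exp_log (by positivity)]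
      ring

theorem noisy_secant_estimate_general
    {Ω : Type*} [MeasurableSpace Ω] (μ : Measure Ω) [IsProbabilityMeasure μ]
    (α : ℝ) (hα : 0 < α)
    (f : ℝ → ℝ)
    (hsc : ∀ x y : ℝ, f y ≥ f x + deriv f x * (y - x) + α / 2 * (y - x) ^ 2)
    (x y : ℝ) (hxy : x < y)
    (p : ℝ) (hp : p ∈ Set.Ioo (0 : ℝ) 1)
    (n : ℕ) (hn : 32 * Real.log (2 / p) / (α ^ 2 * (y - x) ^ 4) ≤ (n : ℝ))
    -- the `2n` noise variables: `e (Sum.inl i) = ε_i` (noise at `x`) and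
    -- `e (Sum.inr i) = ε'_i` (noise at `y`)
    (e : Fin n ⊕ Fin n → Ω → ℝ)
    (hmeas : ∀ i, Measurable (e i))
    (hindep : iIndepFun e μ)
    (hmean : ∀ i, ∫ ω, e i ω ∂μ = 0)
    (hsupp : ∀ i, ∃ a b : ℝ, b - a ≤ 1 ∧ ∀ ω, e i ω ∈ Set.Icc a b)
    -- the sample averages and the estimated secant
    (Fx Fy g : Ω → ℝ)
    (hFx : ∀ ω, Fx ω = f x + (1 / (n : ℝ)) * ∑ i : Fin n, e (Sum.inl i) ω)
    (hFy : ∀ ω, Fy ω = f y + (1 / (n : ℝ)) * ∑ i : Fin n, e (Sum.inr i) ω)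
    (hg : ∀ ω, g ω = (Fy ω - Fx ω + α * (y - x) ^ 2 / 4) / (y - x)) :
    ENNReal.ofReal ((1 - p) ^ 2) ≤
      μ {ω | deriv f x ≤ (f y - f x) / (y - x) ∧
             (f y - f x) / (y - x) ≤ g ω ∧
             g ω ≤ deriv f y} := by
  obtain ⟨hp0, hp1⟩ := hp
  have hn0 : (0 : ℝ) < n := by
    have : 0 < log (2 / p) := log_pos ((one_lt_div hp0).2 (by linarith))
    exact lt_of_lt_of_le (by positivity) hn
  have hsample : 2 * log (2 / p) ≤ n * (α * (y - x) ^ 2 / 4) ^ 2 := by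
    rw [div_le_iff₀ (by positivity)] at hn
    nlinarith
  set s := α * (y - x) ^ 2 / 4
  have hsub (i : Fin n ⊕ Fin n) : HasSubgaussianMGF (e i) ((1 / 2) ^ 2) μ := by
    obtain ⟨a, b, hab, hmem⟩ := hsupp i
    simpa using hasSubgaussianMGF_of_mem_Icc_of_integral_eq_zero_of_sub_le (d := 1) (hmeas i)
      hmem (by simpa using hab) (hmean i)
  set S : Ω → ℝ := fun ω ↦ ∑ j, e (.inr j) ω - ∑ i, e (.inl i) ω
  have hgood : 1 - 2 * exp (-(n * s ^ 2)) ≤ μ.real {ω | |S ω| < n * s} := by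
    convert (HasSubgaussianMGF.sum_sub_sum_of_iIndepFun hindep hsub).one_sub_le_measureReal_abs_lt
      (by positivity : 0 ≤ (n : ℝ) * s) using 4
    push_cast [Fintype.card_fin]
    field_simp
    ring
  calc ENNReal.ofReal ((1 - p) ^ 2) ≤ μ {ω | |S ω| < n * s} := by
        rw [← ofReal_measureReal]
        exact ENNReal.ofReal_le_ofReal (by nlinarith [exp_neg_le_sq_div_four hp0 hsample])
    _ ≤ _ := measure_mono fun ω hω ↦ by
        rw [Set.mem_ofPred_eq, hg, hFy, hFx]
        refine secant_bounds_of_strongly_convex hsc hxy ?_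
        rw [← mul_sub, abs_mul, abs_of_pos (by positivity), one_div_mul_eq_div, div_le_iff₀ hn0,
          mul_comm]
        exact hω.le

/-- Gradient estimation from noisy function evaluations: with
`n ≥ 32 log(2/p) / (α² (y-x)⁴)` i.i.d. mean-zero noise variables of support
diameter at most 1 at each of `x` and `y`, the estimated secant
`g = (F̄_y - F̄_x + α(y-x)²/4)/(y-x)` built from the sample averages satisfies
`f'(x) ≤ (f(y)-f(x))/(y-x) ≤ g ≤ f'(y)` with probability at least `(1-p)²`. -/
theorem noisy_secant_estimate
    {Ω : Type*} [MeasurableSpace Ω] (μ : Measure Ω) [IsProbabilityMeasure μ]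
    (α : ℝ) (hα : 0 < α)
    (f : ℝ → ℝ) (hf : Differentiable ℝ f)
    (hsc : ∀ x y : ℝ, f y ≥ f x + deriv f x * (y - x) + α / 2 * (y - x) ^ 2)
    (x y : ℝ) (hxy : x < y)
    (p : ℝ) (hp : p ∈ Set.Ioo (0 : ℝ) 1)
    (n : ℕ) (hn : 32 * Real.log (2 / p) / (α ^ 2 * (y - x) ^ 4) ≤ (n : ℝ))
    -- the `2n` noise variables: `e (Sum.inl i) = ε_i` (noise at `x`) and
    -- `e (Sum.inr i) = ε'_i` (noise at `y`)
    (e : Fin n ⊕ Fin n → Ω → ℝ)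
    (hmeas : ∀ i, Measurable (e i))
    (hindep : iIndepFun e μ)
    (hident : ∀ i j, IdentDistrib (e i) (e j) μ μ)
    (hmean : ∀ i, ∫ ω, e i ω ∂μ = 0)
    (hsupp : ∀ i, ∃ a b : ℝ, b - a ≤ 1 ∧ ∀ ω, e i ω ∈ Set.Icc a b)
    -- the sample averages and the estimated secant
    (Fx Fy g : Ω → ℝ)
    (hFx : ∀ ω, Fx ω = f x + (1 / (n : ℝ)) * ∑ i : Fin n, e (Sum.inl i) ω)
    (hFy : ∀ ω, Fy ω = f y + (1 / (n : ℝ)) * ∑ i : Fin n, e (Sum.inr i) ω)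
    (hg : ∀ ω, g ω = (Fy ω - Fx ω + α * (y - x) ^ 2 / 4) / (y - x)) :
    ENNReal.ofReal ((1 - p) ^ 2) ≤
      μ {ω | deriv f x ≤ (f y - f x) / (y - x) ∧
             (f y - f x) / (y - x) ≤ g ω ∧
             g ω ≤ deriv f y} :=
  noisy_secant_estimate_general μ α hα f hsc x y hxy p hp n hn e hmeas hindep hmean hsupp Fx Fy g
    hFx hFy hg
end

section
/- Let 0 < α ≤ β, let f : ℝ → ℝ be differentiable, α-strongly convex, and β-smooth, let x* ∈ ℝ satisfy f'(x*) = 0, let δ > 0 and γ > 1, and let N be a natural number. Let x : ℕ → ℝ be a sequence with x_1 ≤ x* such that for every t < N, setting s_t = (f(x_t) − f(x_t − δ))/δ (the secant from the lagged point x_t − δ to x_t), we have −(1/β)·s_t ≥ (1 + γ)·δ and x_{t+1} = x_t − δ − (1/β)·s_t. Then for all t ≤ N: x_t ≤ x_{t+1} − δ (in particular the points x_1 − δ, x_1, x_2 − δ, x_2, … are nondecreasing) and x_{t+1} ≤ x*. -/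
/-!
The steep-secant condition forces each step to move right by at least `γδ ≥ δ` beyond the lag,
which is the monotonicity. For no overshoot, β-smoothness bounds the lagged secant below by
`f'(x_t) - βδ/2`, and (adding the two quadratic upper bounds between `x_t` and `x*`) bounds
`-f'(x_t)` by `β (x* - x_t)`; so the step from `x_t ≤ x*` lands at most at `x* - δ/2`.
-/

/-- The quadratic upper bound defining β-smoothness. -/
def HasQuadUpperBound (β : ℝ) (f : ℝ → ℝ) : Prop :=
  ∀ x y : ℝ, f y ≤ f x + deriv f x * (y - x) + β / 2 * (y - x) ^ 2

noncomputable def lgdStep (f : ℝ → ℝ) (β δ x : ℝ) : ℝ :=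
  x - δ - (1 / β) * ((f x - f (x - δ)) / δ)

namespace HasQuadUpperBound

variable {β : ℝ} {f : ℝ → ℝ}

theorem deriv_sub_le_secant (hsm : HasQuadUpperBound β f) {δ : ℝ} (hδ : 0 < δ) (x : ℝ) :
    deriv f x - β * δ / 2 ≤ (f x - f (x - δ)) / δ := by
  have h := hsm x (x - δ)
  rw [le_div_iff₀ hδ]
  nlinarith

theorem deriv_sub_deriv_le (hsm : HasQuadUpperBound β f) {x y : ℝ} (hxy : x ≤ y) :
    deriv f y - deriv f x ≤ β * (y - x) := by
  rcases hxy.eq_or_lt with rfl | hlt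
  · simp
  have hsum : (deriv f y - deriv f x) * (y - x) ≤ β * (y - x) * (y - x) := by
    nlinarith [hsm x y, hsm y x]
  exact le_of_mul_le_mul_right hsum (sub_pos.mpr hlt)

theorem lgdStep_le_sub_half (hsm : HasQuadUpperBound β f) (hβ : 0 < β) {δ : ℝ} (hδ : 0 < δ)
    {xs x : ℝ} (hxs : deriv f xs = 0) (hx : x ≤ xs) :
    lgdStep f β δ x ≤ xs - δ / 2 := by
  have hsecant : -β * (xs - x + δ / 2) ≤ (f x - f (x - δ)) / δ := by
    linarith [hsm.deriv_sub_deriv_le hx, hsm.deriv_sub_le_secant hδ x]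
  have hscaled : -(1 / β) * ((f x - f (x - δ)) / δ) ≤ xs - x + δ / 2 := by
    rw [neg_mul, neg_le, one_div, le_inv_mul_iff₀ hβ]
    linarith
  unfold lgdStep
  linarith

end HasQuadUpperBound

theorem le_lgdStep_sub_of_steep {f : ℝ → ℝ} {β δ γ x : ℝ} (hδ : 0 ≤ δ) (hγ : 1 ≤ γ)
    (hsteep : -(1 / β) * ((f x - f (x - δ)) / δ) ≥ (1 + γ) * δ) :
    x ≤ lgdStep f β δ x - δ := by
  unfold lgdStep
  nlinarith

theorem lgd_noiseless_monotone_no_overshoot_general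
    (α β : ℝ) (hα : 0 < α) (hαβ : α ≤ β)
    (f : ℝ → ℝ)
    (hsm : ∀ x y : ℝ, f y ≤ f x + deriv f x * (y - x) + β / 2 * (y - x) ^ 2)
    (xs : ℝ) (hxs : deriv f xs = 0)
    (δ γ : ℝ) (hδ : 0 < δ) (hγ : 1 < γ)
    (N : ℕ) (x : ℕ → ℝ) (hx1 : x 1 ≤ xs)
    (hstep : ∀ t : ℕ, 1 ≤ t → t < N →
      -(1 / β) * ((f (x t) - f (x t - δ)) / δ) ≥ (1 + γ) * δ ∧
      x (t + 1) = x t - δ - (1 / β) * ((f (x t) - f (x t - δ)) / δ)) :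
    (∀ t : ℕ, 1 ≤ t → t < N → x t ≤ x (t + 1) - δ) ∧
    (∀ t : ℕ, 1 ≤ t → t ≤ N → x t ≤ xs) := by
  have hβ : 0 < β := hα.trans_le hαβ
  have hsm : HasQuadUpperBound β f := hsm
  refine ⟨fun t ht htN => ?_, fun t ht htN => ?_⟩
  · obtain ⟨hsteep, hnext⟩ := hstep t ht htN
    rw [hnext]
    exact le_lgdStep_sub_of_steep hδ.le hγ.le hsteep
  · induction t, ht using Nat.le_induction with
    | base => exact hx1
    | succ t ht ih =>
      rw [(hstep t ht htN).2]
      exact (hsm.lgdStep_le_sub_half hβ hδ hxs (ih (by omega))).trans (by linarith)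

/-- Monotonicity / no-overshoot for noiseless Lagged Gradient
Descent: while the lagged secant is steep (`-(1/β)·s_t ≥ (1+γ)δ`) and
`x_{t+1} = x_t - δ - (1/β)·s_t` with `s_t = (f(x_t) - f(x_t - δ))/δ`, the
sampled points are nondecreasing (`x_t ≤ x_{t+1} - δ`) and never overshoot the
stationary point `x*`. -/
theorem lgd_noiseless_monotone_no_overshoot
    (α β : ℝ) (hα : 0 < α) (hαβ : α ≤ β)
    (f : ℝ → ℝ) (hf : Differentiable ℝ f)
    (hsc : ∀ x y : ℝ, f y ≥ f x + deriv f x * (y - x) + α / 2 * (y - x) ^ 2)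
    (hsm : ∀ x y : ℝ, f y ≤ f x + deriv f x * (y - x) + β / 2 * (y - x) ^ 2)
    (xs : ℝ) (hxs : deriv f xs = 0)
    (δ γ : ℝ) (hδ : 0 < δ) (hγ : 1 < γ)
    (N : ℕ) (x : ℕ → ℝ) (hx1 : x 1 ≤ xs)
    (hstep : ∀ t : ℕ, 1 ≤ t → t < N →
      -(1 / β) * ((f (x t) - f (x t - δ)) / δ) ≥ (1 + γ) * δ ∧
      x (t + 1) = x t - δ - (1 / β) * ((f (x t) - f (x t - δ)) / δ)) :
    (∀ t : ℕ, 1 ≤ t → t < N → x t ≤ x (t + 1) - δ) ∧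
    (∀ t : ℕ, 1 ≤ t → t ≤ N → x t ≤ xs) :=
  lgd_noiseless_monotone_no_overshoot_general α β hα hαβ f hsm xs hxs δ γ hδ hγ N x hx1 hstep
end

section
/- Let 0 < α ≤ β, let f : ℝ → ℝ be differentiable, α-strongly convex, and β-smooth, let p_min ∈ ℝ and x* > p_min with f'(x*) = 0, and fix γ > 1. Then there exists a constant C > 0 (depending only on α, β, γ, f, p_min, x*) such that the following holds for every natural number T ≥ 2 with T^{-1/2} ≤ x* − p_min. Set δ = T^{-1/2}, and define x_1 = p_min + δ and recursively for t ≥ 1: s_t = (f(x_t) − f(x_t − δ))/δ; if −(1/β)·s_t ≥ (1 + γ)δ, set x_{t+1} = x_t − δ − (1/β)·s_t, and otherwise set x_{t+1} = x_t. Let τ be the least t with −(1/β)·s_t < (1 + γ)δ if such t ≤ ⌊T/2⌋ exists, and τ = ⌊T/2⌋ otherwise. Then the total regret, namely Σ_{t=1}^{τ} [(f(x_t − δ) − f(x*)) + (f(x_t) − f(x*))] + (T − 2τ)·(f(x_τ) − f(x*)) when T ≥ 2τ, is at most C; in particular it is bounded independently of T. -/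
/-!
Write `d = x* - x` for the gap of an iterate. The quadratic tangent bounds sandwich the
lagged slope, `-β (d + δ) ≤ f' (x - δ) ≤ s ≤ f' x ≤ -α d`, so an active step keeps the
iterate to the left of `x*` and contracts the gap: `d' ≤ (1 - α/β) d + δ`. Hence
`d_t ≤ (1 - α/β)^(t-1) d_1 + δ β/α`, and the regret `β (d_t + δ)²` of round `t` sums over
the `τ ≤ T/2` active rounds to a geometric series plus `O(τ δ²) = O(1)`. Afterwards either
the slope test failed, which forces `d_τ = O(δ)` and regret `O(δ²)` in each of at most
`T = δ⁻²` remaining rounds, or `τ = ⌊T/2⌋` and at most one round remains.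
-/

open Finset

def HasQuadraticLowerTangent (f : ℝ → ℝ) (α : ℝ) : Prop :=
  ∀ x y : ℝ, f y ≥ f x + deriv f x * (y - x) + α / 2 * (y - x) ^ 2

def HasQuadraticUpperTangent (f : ℝ → ℝ) (β : ℝ) : Prop :=
  ∀ x y : ℝ, f y ≤ f x + deriv f x * (y - x) + β / 2 * (y - x) ^ 2

noncomputable def laggedSlope (f : ℝ → ℝ) (δ x : ℝ) : ℝ := (f x - f (x - δ)) / δ

section

variable {f : ℝ → ℝ} {α β δ x₀ : ℝ}

namespace HasQuadraticLowerTangent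

theorem apply_le_of_deriv_eq_zero (h : HasQuadraticLowerTangent f α) (hα : 0 ≤ α)
    (h0 : deriv f x₀ = 0) (y : ℝ) : f x₀ ≤ f y := by
  have := h x₀ y
  rw [h0] at this
  have : 0 ≤ α / 2 * (y - x₀) ^ 2 := by positivity
  linarith

theorem deriv_le_of_le (h : HasQuadraticLowerTangent f α) (h0 : deriv f x₀ = 0) {y : ℝ}
    (hy : y ≤ x₀) : deriv f y ≤ -(α * (x₀ - y)) := by
  rcases hy.eq_or_lt with rfl | hlt
  · simp [h0]
  · have h1 := h y x₀
    have h2 := h x₀ y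
    rw [h0] at h2
    have : deriv f y * (x₀ - y) ≤ -(α * (x₀ - y)) * (x₀ - y) := by nlinarith
    exact le_of_mul_le_mul_right this (sub_pos.2 hlt)

theorem laggedSlope_le_deriv (h : HasQuadraticLowerTangent f α) (hα : 0 ≤ α) (hδ : 0 < δ)
    (x : ℝ) : laggedSlope f δ x ≤ deriv f x := by
  rw [laggedSlope, div_le_iff₀ hδ]
  have := h x (x - δ)
  nlinarith [mul_nonneg hα (sq_nonneg δ)]

theorem deriv_le_laggedSlope (h : HasQuadraticLowerTangent f α) (hα : 0 ≤ α) (hδ : 0 < δ)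
    (x : ℝ) : deriv f (x - δ) ≤ laggedSlope f δ x := by
  rw [laggedSlope, le_div_iff₀ hδ]
  have := h (x - δ) x
  nlinarith [mul_nonneg hα (sq_nonneg δ)]

end HasQuadraticLowerTangent

namespace HasQuadraticUpperTangent

theorem apply_sub_le_of_deriv_eq_zero (h : HasQuadraticUpperTangent f β) (h0 : deriv f x₀ = 0)
    (y : ℝ) : f y - f x₀ ≤ β / 2 * (x₀ - y) ^ 2 := by
  have := h x₀ y
  rw [h0] at this
  nlinarith

theorem neg_mul_le_deriv_of_le (h : HasQuadraticUpperTangent f β) (h0 : deriv f x₀ = 0)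
    {y : ℝ} (hy : y ≤ x₀) : -(β * (x₀ - y)) ≤ deriv f y := by
  rcases hy.eq_or_lt with rfl | hlt
  · simp [h0]
  · have h1 := h y x₀
    have h2 := h.apply_sub_le_of_deriv_eq_zero h0 y
    have : -(β * (x₀ - y)) * (x₀ - y) ≤ deriv f y * (x₀ - y) := by nlinarith
    exact le_of_mul_le_mul_right this (sub_pos.2 hlt)

theorem lagged_regret_le (h : HasQuadraticUpperTangent f β) (hβ : 0 ≤ β)
    (h0 : deriv f x₀ = 0) (hδ : 0 ≤ δ) {x : ℝ} (hx : x ≤ x₀) :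
    (f (x - δ) - f x₀) + (f x - f x₀) ≤ β * (x₀ - x + δ) ^ 2 := by
  have h1 := h.apply_sub_le_of_deriv_eq_zero h0 (x - δ)
  have h2 := h.apply_sub_le_of_deriv_eq_zero h0 x
  have : (x₀ - x) ^ 2 ≤ (x₀ - x + δ) ^ 2 := pow_le_pow_left₀ (by linarith) (by linarith) 2
  rw [show x₀ - (x - δ) = x₀ - x + δ by ring] at h1
  nlinarith

end HasQuadraticUpperTangent

theorem sum_Icc_pow_sub_one_le {ρ : ℝ} (hρ0 : 0 ≤ ρ) (hρ1 : ρ < 1) (n : ℕ) :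
    ∑ t ∈ Icc 1 n, ρ ^ (t - 1) ≤ 1 / (1 - ρ) := by
  rw [← Ico_add_one_right_eq_Icc, sum_Ico_eq_sum_range, range_eq_Ico]
  simpa using geom_sum_Ico_le_of_lt_one (m := 0) (n := n) hρ0 hρ1

theorem sum_Icc_sq_pow_mul_add_le {ρ : ℝ} (hρ0 : 0 ≤ ρ) (hρ1 : ρ < 1) (a b : ℝ) (n : ℕ) :
    ∑ t ∈ Icc 1 n, (ρ ^ (t - 1) * a + b) ^ 2 ≤ 2 * a ^ 2 / (1 - ρ) + 2 * n * b ^ 2 := by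
  have hterm : ∀ t ∈ Icc 1 n, (ρ ^ (t - 1) * a + b) ^ 2 ≤ 2 * a ^ 2 * ρ ^ (t - 1) + 2 * b ^ 2 := by
    intro t _
    have hpow : (ρ ^ (t - 1)) ^ 2 ≤ ρ ^ (t - 1) :=
      pow_le_of_le_one (pow_nonneg hρ0 _) (pow_le_one₀ hρ0 hρ1.le) two_ne_zero
    nlinarith [sq_nonneg (ρ ^ (t - 1) * a - b), mul_le_mul_of_nonneg_left hpow (sq_nonneg a)]
  calc ∑ t ∈ Icc 1 n, (ρ ^ (t - 1) * a + b) ^ 2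
      ≤ ∑ t ∈ Icc 1 n, (2 * a ^ 2 * ρ ^ (t - 1) + 2 * b ^ 2) := sum_le_sum hterm
    _ = 2 * a ^ 2 * ∑ t ∈ Icc 1 n, ρ ^ (t - 1) + 2 * n * b ^ 2 := by
      rw [sum_add_distrib, ← mul_sum, sum_const, Nat.card_Icc, nsmul_eq_mul]
      push_cast; ring
    _ ≤ 2 * a ^ 2 * (1 / (1 - ρ)) + 2 * n * b ^ 2 := by
      gcongr
      exact sum_Icc_pow_sub_one_le hρ0 hρ1 n
    _ = 2 * a ^ 2 / (1 - ρ) + 2 * n * b ^ 2 := by ring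

theorem rpow_neg_half_sq {x : ℝ} (hx : 0 ≤ x) : (x ^ (-(1 : ℝ) / 2)) ^ 2 = x⁻¹ := by
  rw [← Real.rpow_natCast, ← Real.rpow_mul hx]
  norm_num [Real.rpow_neg_one]

theorem lgd_step_gap (hsc : HasQuadraticLowerTangent f α) (hsm : HasQuadraticUpperTangent f β)
    (hα : 0 ≤ α) (hβ : 0 < β) (h0 : deriv f x₀ = 0) (hδ : 0 < δ) {x : ℝ} (hx : x ≤ x₀) :
    x - δ - 1 / β * laggedSlope f δ x ≤ x₀ ∧
      x₀ - (x - δ - 1 / β * laggedSlope f δ x) ≤ (1 - α / β) * (x₀ - x) + δ := by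
  have hlo : -(β * (x₀ - (x - δ))) ≤ laggedSlope f δ x :=
    (hsm.neg_mul_le_deriv_of_le h0 (by linarith)).trans (hsc.deriv_le_laggedSlope hα hδ x)
  have hhi : laggedSlope f δ x ≤ -(α * (x₀ - x)) :=
    (hsc.laggedSlope_le_deriv hα hδ x).trans (hsc.deriv_le_of_le h0 hx)
  rw [one_div_mul_eq_div]
  constructor
  · have : -(x₀ - (x - δ)) ≤ laggedSlope f δ x / β := by
      rw [le_div_iff₀ hβ]; linarith
    linarith
  · have : laggedSlope f δ x / β ≤ -(α / β * (x₀ - x)) := by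
      rw [div_le_iff₀ hβ]; field_simp; linarith
    linarith

theorem lgd_gap_le (hsc : HasQuadraticLowerTangent f α) (hsm : HasQuadraticUpperTangent f β)
    (hα : 0 < α) (hαβ : α ≤ β) (h0 : deriv f x₀ = 0) (hδ : 0 < δ) {x : ℕ → ℝ} {τ : ℕ}
    (hx1 : x 1 ≤ x₀)
    (hstep : ∀ t, 1 ≤ t → t < τ → x (t + 1) = x t - δ - 1 / β * laggedSlope f δ (x t)) :
    ∀ n, 1 ≤ n → n ≤ τ →
      x n ≤ x₀ ∧ x₀ - x n ≤ (1 - α / β) ^ (n - 1) * (x₀ - x 1) + δ * (β / α) := by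
  have hβ : 0 < β := hα.trans_le hαβ
  have hρ : 0 ≤ 1 - α / β := sub_nonneg.2 ((div_le_one hβ).2 hαβ)
  intro n hn
  induction n, hn using Nat.le_induction with
  | base =>
    refine fun _ ↦ ⟨hx1, ?_⟩
    rw [Nat.sub_self, pow_zero, one_mul]
    exact le_add_of_nonneg_right (by positivity)
  | succ t ht ih =>
    intro htτ
    obtain ⟨hxt, hgap⟩ := ih (by omega)
    obtain ⟨hle, hcontract⟩ := lgd_step_gap hsc hsm hα.le hβ h0 hδ hxt
    rw [hstep t ht (by omega)]
    refine ⟨hle, hcontract.trans ?_⟩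
    have hfix : (1 - α / β) * (δ * (β / α)) + δ = δ * (β / α) := by field_simp; ring
    rw [show t + 1 - 1 = t - 1 + 1 by omega, pow_succ]
    linarith [mul_le_mul_of_nonneg_left hgap hρ]

theorem lgd_sum_regret_le (hsm : HasQuadraticUpperTangent f β) (hβ : 0 ≤ β)
    (h0 : deriv f x₀ = 0) (hδ : 0 ≤ δ) {ρ d c : ℝ} (hρ0 : 0 ≤ ρ) (hρ1 : ρ < 1)
    {x : ℕ → ℝ} {τ : ℕ}
    (hgap : ∀ n, 1 ≤ n → n ≤ τ → x n ≤ x₀ ∧ x₀ - x n ≤ ρ ^ (n - 1) * d + c) :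
    ∑ t ∈ Icc 1 τ, ((f (x t - δ) - f x₀) + (f (x t) - f x₀)) ≤
      β * (2 * d ^ 2 / (1 - ρ) + 2 * τ * (c + δ) ^ 2) := by
  calc ∑ t ∈ Icc 1 τ, ((f (x t - δ) - f x₀) + (f (x t) - f x₀))
      ≤ ∑ t ∈ Icc 1 τ, β * (ρ ^ (t - 1) * d + (c + δ)) ^ 2 := by
        refine sum_le_sum fun t ht ↦ ?_
        obtain ⟨hxt, hgapt⟩ := hgap t (mem_Icc.1 ht).1 (mem_Icc.1 ht).2
        refine (hsm.lagged_regret_le hβ h0 hδ hxt).trans (mul_le_mul_of_nonneg_left ?_ hβ)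
        exact pow_le_pow_left₀ (by linarith) (by linarith) 2
    _ = β * ∑ t ∈ Icc 1 τ, (ρ ^ (t - 1) * d + (c + δ)) ^ 2 := (mul_sum ..).symm
    _ ≤ β * (2 * d ^ 2 / (1 - ρ) + 2 * τ * (c + δ) ^ 2) :=
        mul_le_mul_of_nonneg_left (sum_Icc_sq_pow_mul_add_le hρ0 hρ1 d (c + δ) τ) hβ

theorem lgd_gap_le_of_stabilized (hsc : HasQuadraticLowerTangent f α) (hα : 0 < α) (hβ : 0 < β)
    (h0 : deriv f x₀ = 0) (hδ : 0 < δ) {x c : ℝ} (hx : x ≤ x₀)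
    (hstab : -(1 / β) * laggedSlope f δ x < c) : x₀ - x ≤ β / α * c := by
  have hslope := (hsc.laggedSlope_le_deriv hα.le hδ x).trans (hsc.deriv_le_of_le h0 hx)
  have : -laggedSlope f δ x < β * c := by
    rw [neg_mul, one_div_mul_eq_div, neg_lt, lt_div_iff₀ hβ] at hstab
    linarith
  rw [div_mul_eq_mul_div, le_div_iff₀ hα]
  linarith

theorem lgd_terminal_regret_le (hsc : HasQuadraticLowerTangent f α)
    (hsm : HasQuadraticUpperTangent f β) (hα : 0 < α) (hβ : 0 < β) (h0 : deriv f x₀ = 0)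
    (hδ : 0 < δ) {γ B y : ℝ} {T τ : ℕ} (hTδ : T * δ ^ 2 = 1) (h2τ : 2 * τ ≤ T) (hy : y ≤ x₀)
    (hgap : x₀ - y ≤ B)
    (hstab : -(1 / β) * laggedSlope f δ y < (1 + γ) * δ ∨ τ = T / 2) :
    (T - 2 * τ : ℝ) * (f y - f x₀) ≤ β / 2 * (β / α * (1 + γ)) ^ 2 + β / 2 * B ^ 2 := by
  have hreg := hsm.apply_sub_le_of_deriv_eq_zero h0 y
  have hreg0 : 0 ≤ f y - f x₀ := sub_nonneg.2 (hsc.apply_le_of_deriv_eq_zero hα.le h0 y)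
  have h2τ' : (2 * τ : ℝ) ≤ T := by exact_mod_cast h2τ
  rcases hstab with hstab | hτ
  · have hd := lgd_gap_le_of_stabilized hsc hα hβ h0 hδ hy hstab
    have : f y - f x₀ ≤ β / 2 * (β / α * ((1 + γ) * δ)) ^ 2 := hreg.trans (by gcongr)
    calc (T - 2 * τ : ℝ) * (f y - f x₀) ≤ T * (β / 2 * (β / α * ((1 + γ) * δ)) ^ 2) := by
          gcongr; linarith
      _ = β / 2 * (β / α * (1 + γ)) ^ 2 * (T * δ ^ 2) := by ring
      _ ≤ _ := by rw [hTδ, mul_one]; exact le_add_of_nonneg_right (by positivity)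
  · have hT : (T : ℝ) - 2 * τ ≤ 1 := by
      have : (T : ℝ) ≤ 2 * τ + 1 := by exact_mod_cast (by omega : T ≤ 2 * τ + 1)
      linarith
    have : f y - f x₀ ≤ β / 2 * B ^ 2 := hreg.trans (by gcongr)
    calc (T - 2 * τ : ℝ) * (f y - f x₀) ≤ 1 * (β / 2 * B ^ 2) :=
          mul_le_mul hT this hreg0 zero_le_one
      _ ≤ _ := by rw [one_mul]; exact le_add_of_nonneg_left (by positivity)

end

theorem lgd_noiseless_constant_regret_general
    (α β : ℝ) (hα : 0 < α) (hαβ : α ≤ β)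
    (f : ℝ → ℝ)
    (hsc : ∀ x y : ℝ, f y ≥ f x + deriv f x * (y - x) + α / 2 * (y - x) ^ 2)
    (hsm : ∀ x y : ℝ, f y ≤ f x + deriv f x * (y - x) + β / 2 * (y - x) ^ 2)
    (pmin xs : ℝ) (hxs : deriv f xs = 0)
    (γ : ℝ) :
    ∃ C : ℝ, 0 < C ∧
      ∀ T : ℕ, 2 ≤ T →
      ∀ δ : ℝ, δ = (T : ℝ) ^ (-(1 : ℝ) / 2) → δ ≤ xs - pmin →
      ∀ x : ℕ → ℝ, x 1 = pmin + δ →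
      (∀ t : ℕ, 1 ≤ t →
        x (t + 1) =
          if (1 + γ) * δ ≤ -(1 / β) * ((f (x t) - f (x t - δ)) / δ) then
            x t - δ - (1 / β) * ((f (x t) - f (x t - δ)) / δ)
          else x t) →
      ∀ τ : ℕ, 1 ≤ τ → τ ≤ T / 2 →
      (∀ t : ℕ, 1 ≤ t → t < τ →
        (1 + γ) * δ ≤ -(1 / β) * ((f (x t) - f (x t - δ)) / δ)) →
      (-(1 / β) * ((f (x τ) - f (x τ - δ)) / δ) < (1 + γ) * δ ∨ τ = T / 2) →
      2 * τ ≤ T →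
      (∑ t ∈ Finset.Icc 1 τ, ((f (x t - δ) - f xs) + (f (x t) - f xs))) +
        ((T : ℝ) - 2 * (τ : ℝ)) * (f (x τ) - f xs) ≤ C := by
  have hβ : 0 < β := hα.trans_le hαβ
  refine ⟨β * (2 * (xs - pmin) ^ 2 * (β / α) + (β / α + 1) ^ 2) +
    (β / 2 * (β / α * (1 + γ)) ^ 2 + β / 2 * ((xs - pmin) * (β / α + 1)) ^ 2) + 1,
    by positivity, ?_⟩
  intro T hT δ hδ hδD x hx1 hx τ hτ1 _ hact hstab h2τ
  have hTpos : (0 : ℝ) < T := by positivity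
  have hδ0 : 0 < δ := hδ ▸ by positivity
  have hTδ : T * δ ^ 2 = 1 := by rw [hδ, rpow_neg_half_sq hTpos.le, mul_inv_cancel₀ hTpos.ne']
  have hτδ : 2 * τ * δ ^ 2 ≤ 1 := hTδ ▸ by gcongr; exact_mod_cast h2τ
  have hstep (t : ℕ) (ht : 1 ≤ t) (htτ : t < τ) :
      x (t + 1) = x t - δ - 1 / β * laggedSlope f δ (x t) := by
    rw [hx t ht, if_pos (hact t ht htτ)]; rfl
  have hρ0 : 0 ≤ 1 - α / β := sub_nonneg.2 ((div_le_one hβ).2 hαβ)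
  have hρ1 : 1 - α / β < 1 := sub_lt_self _ (by positivity)
  have hgap := lgd_gap_le hsc hsm hα hαβ hxs hδ0 (by linarith) hstep
  rw [hx1, show xs - (pmin + δ) = xs - pmin - δ by ring] at hgap
  have hsum := lgd_sum_regret_le hsm hβ.le hxs hδ0.le hρ0 hρ1 hgap
  rw [sub_sub_cancel, div_div_eq_mul_div] at hsum
  obtain ⟨hxτ, hgapτ⟩ := hgap τ hτ1 le_rfl
  have hgapτ' : xs - x τ ≤ (xs - pmin) * (β / α + 1) := by
    have : (1 - α / β) ^ (τ - 1) * (xs - pmin - δ) ≤ xs - pmin - δ :=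
      mul_le_of_le_one_left (by linarith) (pow_le_one₀ hρ0 hρ1.le)
    have : δ * (β / α) ≤ (xs - pmin) * (β / α) := by gcongr
    linarith
  have hterm := lgd_terminal_regret_le hsc hsm hα hβ hxs hδ0 hTδ h2τ hxτ hgapτ' hstab
  have : (xs - pmin - δ) ^ 2 ≤ (xs - pmin) ^ 2 := pow_le_pow_left₀ (by linarith) (by linarith) 2
  calc _ ≤ β * (2 * (xs - pmin - δ) ^ 2 * (β / α) + (2 * τ * δ ^ 2) * (β / α + 1) ^ 2) +
        (β / 2 * (β / α * (1 + γ)) ^ 2 + β / 2 * ((xs - pmin) * (β / α + 1)) ^ 2) :=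
        add_le_add (hsum.trans_eq (by ring)) hterm
    _ ≤ _ := le_add_of_le_of_nonneg
        (by gcongr; exact mul_le_of_le_one_left (by positivity) hτδ) zero_le_one

/-- Constant-regret bound for noiseless Lagged Gradient
Descent: there is a constant `C > 0`, independent of the horizon `T`, bounding
the total regret of the algorithm with lag `δ = T^{-1/2}` started at
`x_1 = p_min + δ`, run for `⌊T/2⌋` rounds and stabilizing at the first iterate
`x_τ` where the secant condition `-(1/β)·s_t ≥ (1+γ)δ` fails. -/
theorem lgd_noiseless_constant_regret
    (α β : ℝ) (hα : 0 < α) (hαβ : α ≤ β)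
    (f : ℝ → ℝ) (hf : Differentiable ℝ f)
    (hsc : ∀ x y : ℝ, f y ≥ f x + deriv f x * (y - x) + α / 2 * (y - x) ^ 2)
    (hsm : ∀ x y : ℝ, f y ≤ f x + deriv f x * (y - x) + β / 2 * (y - x) ^ 2)
    (pmin xs : ℝ) (hpx : pmin < xs) (hxs : deriv f xs = 0)
    (γ : ℝ) (hγ : 1 < γ) :
    ∃ C : ℝ, 0 < C ∧
      ∀ T : ℕ, 2 ≤ T →
      ∀ δ : ℝ, δ = (T : ℝ) ^ (-(1 : ℝ) / 2) → δ ≤ xs - pmin →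
      ∀ x : ℕ → ℝ, x 1 = pmin + δ →
      (∀ t : ℕ, 1 ≤ t →
        x (t + 1) =
          if (1 + γ) * δ ≤ -(1 / β) * ((f (x t) - f (x t - δ)) / δ) then
            x t - δ - (1 / β) * ((f (x t) - f (x t - δ)) / δ)
          else x t) →
      ∀ τ : ℕ, 1 ≤ τ → τ ≤ T / 2 →
      (∀ t : ℕ, 1 ≤ t → t < τ →
        (1 + γ) * δ ≤ -(1 / β) * ((f (x t) - f (x t - δ)) / δ)) →
      (-(1 / β) * ((f (x τ) - f (x τ - δ)) / δ) < (1 + γ) * δ ∨ τ = T / 2) →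
      2 * τ ≤ T →
      (∑ t ∈ Finset.Icc 1 τ, ((f (x t - δ) - f xs) + (f (x t) - f xs))) +
        ((T : ℝ) - 2 * (τ : ℝ)) * (f (x τ) - f xs) ≤ C :=
  lgd_noiseless_constant_regret_general α β hα hαβ f hsc hsm pmin xs hxs γ
end

section
/- Let 0 < α ≤ β, let f : ℝ → ℝ be differentiable, α-strongly convex, and β-smooth, let x* ∈ ℝ satisfy f'(x*) = 0, let δ > 0, γ > 1, and 0 < ε ≤ αδ²/4, and let N be a natural number. Let x : ℕ → ℝ be a sequence with x_1 ≤ x*, and suppose there are reals A_t, B_t (noisy estimates of f(x_t) and f(x_t − δ)) with |A_t − f(x_t)| ≤ ε/2 and |B_t − f(x_t − δ)| ≤ ε/2 such that, for every t < N, the estimated secant g_t = (A_t − B_t + ε)/δ satisfies −(1/β)·g_t ≥ (1 + γ)·δ and x_{t+1} = x_t − (1/β)·g_t − δ. Then for all t ≤ N: x_t ≤ x_{t+1} − δ (in particular the sampled points x_1 − δ, x_1, x_2 − δ, x_2, … are nondecreasing) and x_{t+1} ≤ x*. -/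
/-!
Each estimated secant overestimates the true backward secant `(f x - f (x - δ)) / δ`, which by
`β`-smoothness is at least `f' x - β δ / 2`. Hence a step moves at most `-f' x / β - δ / 2`,
and since `f'` is `β`-Lipschitz and vanishes at `x*`, `-f' x / β ≤ x* - x` for `x ≤ x*`:
an iterate left of `x*` stays at least `δ / 2` left of it. Monotonicity is immediate from the
steepness condition `-(1/β) g ≥ (1 + γ) δ ≥ 2 δ`.
-/

section Smooth

variable {f : ℝ → ℝ} {β : ℝ}
  (hsm : ∀ x y : ℝ, f y ≤ f x + deriv f x * (y - x) + β / 2 * (y - x) ^ 2)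
include hsm

theorem deriv_sub_le_of_smooth {x y : ℝ} (hxy : x ≤ y) :
    deriv f y - deriv f x ≤ β * (y - x) := by
  rcases hxy.eq_or_lt with rfl | hlt
  · simp
  have hmul : (deriv f y - deriv f x) * (y - x) ≤ β * (y - x) * (y - x) := by
    nlinarith [hsm x y, hsm y x]
  exact le_of_mul_le_mul_right hmul (sub_pos.mpr hlt)

theorem deriv_sub_le_secant {δ : ℝ} (hδ : 0 < δ) (x : ℝ) :
    deriv f x - β * δ / 2 ≤ (f x - f (x - δ)) / δ := by
  rw [le_div_iff₀ hδ]
  nlinarith [hsm x (x - δ)]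

theorem lagged_step_le {xs x g δ : ℝ} (hxs : deriv f xs = 0) (hβ : 0 < β) (hδ : 0 < δ)
    (hx : x ≤ xs) (hg : (f x - f (x - δ)) / δ ≤ g) :
    x - (1 / β) * g - δ ≤ xs := by
  have hderiv : -deriv f x ≤ β * (xs - x) := by
    simpa [hxs] using deriv_sub_le_of_smooth hsm hx
  have hgβ : deriv f x / β - δ / 2 ≤ (1 / β) * g := by
    have := mul_le_mul_of_nonneg_left ((deriv_sub_le_secant hsm hδ x).trans hg)
      (one_div_pos.mpr hβ).le
    field_simp at this ⊢
    linarith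
  have hstep : -(deriv f x / β) ≤ xs - x := by
    rw [← neg_div, div_le_iff₀ hβ]
    linarith
  linarith

end Smooth

theorem sub_le_sub_add_of_abs_sub_le_half {a b u v ε : ℝ} (ha : |a - u| ≤ ε / 2)
    (hb : |b - v| ≤ ε / 2) : u - v ≤ a - b + ε := by
  linarith [(abs_le.mp ha).1, (abs_le.mp hb).2]

theorem static_lgd_monotone_no_overshoot_general
    (α β : ℝ) (hα : 0 < α) (hαβ : α ≤ β)
    (f : ℝ → ℝ)
    (hsm : ∀ x y : ℝ, f y ≤ f x + deriv f x * (y - x) + β / 2 * (y - x) ^ 2)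
    (xs : ℝ) (hxs : deriv f xs = 0)
    (δ γ ε : ℝ) (hδ : 0 < δ) (hγ : 1 < γ)
    (N : ℕ) (x : ℕ → ℝ) (hx1 : x 1 ≤ xs)
    (A B : ℕ → ℝ)
    (hA : ∀ t : ℕ, 1 ≤ t → |A t - f (x t)| ≤ ε / 2)
    (hB : ∀ t : ℕ, 1 ≤ t → |B t - f (x t - δ)| ≤ ε / 2)
    (hstep : ∀ t : ℕ, 1 ≤ t → t < N →
      -(1 / β) * ((A t - B t + ε) / δ) ≥ (1 + γ) * δ ∧
      x (t + 1) = x t - (1 / β) * ((A t - B t + ε) / δ) - δ) :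
    (∀ t : ℕ, 1 ≤ t → t < N → x t ≤ x (t + 1) - δ) ∧
    (∀ t : ℕ, 1 ≤ t → t ≤ N → x t ≤ xs) := by
  refine ⟨fun t ht htN => ?_, fun t ht htN => ?_⟩
  · obtain ⟨hsteep, hnext⟩ := hstep t ht htN
    rw [hnext]
    linarith [mul_lt_mul_of_pos_right hγ hδ]
  · induction t, ht using Nat.le_induction with
    | base => exact hx1
    | succ t ht ih =>
      obtain ⟨-, hnext⟩ := hstep t ht htN
      have hsecant := div_le_div_of_nonneg_right
        (sub_le_sub_add_of_abs_sub_le_half (hA t ht) (hB t ht)) hδ.le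
      rw [hnext]
      exact lagged_step_le hsm hxs (hα.trans_le hαβ) hδ (ih (by omega)) hsecant

/-- Monotonicity / no-overshoot for Static Lagged Gradient
Descent under the accuracy event: with noisy estimates `A_t ≈ f(x_t)`,
`B_t ≈ f(x_t - δ)` accurate to within `ε/2` where `ε ≤ αδ²/4`, while the
estimated secant `g_t = (A_t - B_t + ε)/δ` is steep and
`x_{t+1} = x_t - (1/β)·g_t - δ`, the sampled points are nondecreasing
(`x_t ≤ x_{t+1} - δ`) and never overshoot `x*`. -/
theorem static_lgd_monotone_no_overshoot
    (α β : ℝ) (hα : 0 < α) (hαβ : α ≤ β)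
    (f : ℝ → ℝ) (hf : Differentiable ℝ f)
    (hsc : ∀ x y : ℝ, f y ≥ f x + deriv f x * (y - x) + α / 2 * (y - x) ^ 2)
    (hsm : ∀ x y : ℝ, f y ≤ f x + deriv f x * (y - x) + β / 2 * (y - x) ^ 2)
    (xs : ℝ) (hxs : deriv f xs = 0)
    (δ γ ε : ℝ) (hδ : 0 < δ) (hγ : 1 < γ) (hε : 0 < ε) (hεδ : ε ≤ α * δ ^ 2 / 4)
    (N : ℕ) (x : ℕ → ℝ) (hx1 : x 1 ≤ xs)
    (A B : ℕ → ℝ)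
    (hA : ∀ t : ℕ, 1 ≤ t → |A t - f (x t)| ≤ ε / 2)
    (hB : ∀ t : ℕ, 1 ≤ t → |B t - f (x t - δ)| ≤ ε / 2)
    (hstep : ∀ t : ℕ, 1 ≤ t → t < N →
      -(1 / β) * ((A t - B t + ε) / δ) ≥ (1 + γ) * δ ∧
      x (t + 1) = x t - (1 / β) * ((A t - B t + ε) / δ) - δ) :
    (∀ t : ℕ, 1 ≤ t → t < N → x t ≤ x (t + 1) - δ) ∧
    (∀ t : ℕ, 1 ≤ t → t ≤ N → x t ≤ xs) :=
  static_lgd_monotone_no_overshoot_general α β hα hαβ f hsm xs hxs δ γ ε hδ hγ N x hx1 A B hA hB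
    hstep
end

section
/- Let 0 < α ≤ β, let f : ℝ → ℝ be differentiable, α-strongly convex, and β-smooth, let x* ∈ ℝ satisfy f'(x*) = 0, let δ > 0, γ > 1, and 0 < ε ≤ αδ²/4, and let N be a natural number. Let x : ℕ → ℝ be a sequence with x_1 ≤ x*, and suppose there are reals A_t, B_t with |A_t − f(x_t)| ≤ ε/2 and |B_t − f(x_t − δ)| ≤ ε/2 such that, for every t < N, the estimated secant g_t = (A_t − B_t + ε)/δ satisfies −(1/β)·g_t ≥ (1 + γ)·δ and x_{t+1} = x_t − (1/β)·g_t − δ. Define h_t = f(x_t) − f(x*) and c = 1/(2β) − 1/((1 + γ)β). Then for all t ≤ N, h_{t+1} ≤ h_1 · exp(−2αc·t). -/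
/-!
Strong convexity and β-smoothness pin the ε-biased backward secant `g_t` between
`f'(x_t) - βδ/2` and `f'(x_t)`. Since `-g_t/β ≥ (1 + γ)δ`, the step `-g_t/β - δ` is then close
enough to the gradient step `-f'(x_t)/β` that smoothness yields the decrease
`f(x_{t+1}) ≤ f(x_t) - c f'(x_t)²`, and the Polyak–Łojasiewicz inequality
`f'(x)² ≥ 2α (f(x) - f(x*))` turns it into `h_{t+1} ≤ (1 - 2αc) h_t ≤ e^{-2αc} h_t`.
-/

open Real

lemma le_of_deriv_eq_zero_of_strongConvex {f : ℝ → ℝ} {α xs : ℝ} (hα : 0 ≤ α)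
    (hsc : ∀ x y : ℝ, f y ≥ f x + deriv f x * (y - x) + α / 2 * (y - x) ^ 2)
    (hxs : deriv f xs = 0) (y : ℝ) : f xs ≤ f y := by
  have h := hsc xs y
  rw [hxs] at h
  nlinarith [sq_nonneg (y - xs)]

lemma polyak_lojasiewicz {f : ℝ → ℝ} {α : ℝ} (hα : 0 < α)
    (hsc : ∀ x y : ℝ, f y ≥ f x + deriv f x * (y - x) + α / 2 * (y - x) ^ 2) (xs y : ℝ) :
    2 * α * (f y - f xs) ≤ deriv f y ^ 2 := by
  nlinarith [hsc y xs, sq_nonneg (deriv f y + α * (xs - y))]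

/-- The strong convexity margin `αδ²/2 ≥ 2ε` absorbs the bias `+ ε` and the two errors. -/
lemma secant_estimate_le_deriv {f : ℝ → ℝ} {α δ ε A B y : ℝ} (hδ : 0 < δ)
    (hεδ : ε ≤ α * δ ^ 2 / 4)
    (hsc : ∀ x y : ℝ, f y ≥ f x + deriv f x * (y - x) + α / 2 * (y - x) ^ 2)
    (hA : |A - f y| ≤ ε / 2) (hB : |B - f (y - δ)| ≤ ε / 2) :
    (A - B + ε) / δ ≤ deriv f y := by
  rw [div_le_iff₀ hδ]
  have h := hsc y (y - δ)
  linarith [abs_le.mp hA, abs_le.mp hB]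

lemma deriv_le_secant_estimate_add {f : ℝ → ℝ} {β δ ε A B y : ℝ} (hδ : 0 < δ)
    (hsm : ∀ x y : ℝ, f y ≤ f x + deriv f x * (y - x) + β / 2 * (y - x) ^ 2)
    (hA : |A - f y| ≤ ε / 2) (hB : |B - f (y - δ)| ≤ ε / 2) :
    deriv f y ≤ (A - B + ε) / δ + β * δ / 2 := by
  rw [div_add' _ _ _ hδ.ne', le_div_iff₀ hδ]
  have h := hsm y (y - δ)
  nlinarith [abs_le.mp hA, abs_le.mp hB]

lemma one_add_mul_sub_sq_le {γ D W : ℝ} (hγ : 1 ≤ γ) (hWD : W ≤ D) (hDW : γ * (D - W) ≤ W) :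
    (1 + γ) * (D - W) ^ 2 ≤ 2 * D ^ 2 := by
  have hgap : 0 ≤ D - W := sub_nonneg.2 hWD
  have hW : 0 ≤ W := le_trans (by positivity) hDW
  have hγgap : γ * (D - W) ≤ D := hDW.trans hWD
  nlinarith [mul_le_mul hγgap hγgap (by positivity) (by linarith), mul_nonneg hgap hgap]

lemma le_sub_mul_deriv_sq_of_step {f : ℝ → ℝ} {β γ δ g c y : ℝ} (hβ : 0 < β) (hγ : 1 ≤ γ)
    (hsm : ∀ x y : ℝ, f y ≤ f x + deriv f x * (y - x) + β / 2 * (y - x) ^ 2)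
    (hc : c = 1 / (2 * β) - 1 / ((1 + γ) * β))
    (hlarge : (1 + γ) * δ ≤ -(1 / β) * g) (hg : g ≤ deriv f y) (hg' : deriv f y ≤ g + β * δ) :
    f (y - 1 / β * g - δ) ≤ f y - c * deriv f y ^ 2 := by
  set d := deriv f y
  set W := -g - β * δ with hW_def
  have hmove : y - 1 / β * g - δ - y = W / β := by rw [hW_def]; field_simp; ring
  have hW : γ * β * δ ≤ W := by
    have := (mul_le_mul_iff_of_pos_left hβ).2 hlarge
    field_simp at this
    linarith
  have key := one_add_mul_sub_sq_le hγ (D := -d) (W := W) (by linarith) (by nlinarith)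
  -- with `D = -f'(y)`, the smoothness bound reads `c D² ≤ (2DW - W²)/(2β)`
  have hsplit : c * d ^ 2 + (d * (W / β) + β / 2 * (W / β) ^ 2)
      = ((1 + γ) * (-d - W) ^ 2 - 2 * d ^ 2) / (2 * β * (1 + γ)) := by
    rw [hc]; field_simp; ring
  have hdecrease : c * d ^ 2 + (d * (W / β) + β / 2 * (W / β) ^ 2) ≤ 0 := by
    rw [hsplit]
    exact div_nonpos_of_nonpos_of_nonneg (by nlinarith) (by positivity)
  have hsmooth := hsm y (y - 1 / β * g - δ)
  rw [hmove] at hsmooth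
  linarith

lemma gap_step_le {f : ℝ → ℝ} {α β γ δ ε c xs A B y : ℝ} (hα : 0 < α) (hβ : 0 < β)
    (hγ : 1 ≤ γ) (hδ : 0 < δ) (hεδ : ε ≤ α * δ ^ 2 / 4)
    (hsc : ∀ x y : ℝ, f y ≥ f x + deriv f x * (y - x) + α / 2 * (y - x) ^ 2)
    (hsm : ∀ x y : ℝ, f y ≤ f x + deriv f x * (y - x) + β / 2 * (y - x) ^ 2)
    (hc : c = 1 / (2 * β) - 1 / ((1 + γ) * β))
    (hA : |A - f y| ≤ ε / 2) (hB : |B - f (y - δ)| ≤ ε / 2)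
    (hlarge : (1 + γ) * δ ≤ -(1 / β) * ((A - B + ε) / δ)) :
    f (y - 1 / β * ((A - B + ε) / δ) - δ) - f xs ≤ (1 - 2 * α * c) * (f y - f xs) := by
  have hc_nonneg : 0 ≤ c := by
    rw [hc, sub_nonneg]
    gcongr
    linarith
  have hdescent := le_sub_mul_deriv_sq_of_step hβ hγ hsm hc hlarge
    (secant_estimate_le_deriv hδ hεδ hsc hA hB)
    (by linarith [deriv_le_secant_estimate_add hδ hsm hA hB, mul_pos hβ hδ])
  nlinarith [mul_le_mul_of_nonneg_left (polyak_lojasiewicz hα hsc xs y) hc_nonneg]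

lemma le_mul_exp_neg_of_le_one_sub_mul {u : ℕ → ℝ} {κ : ℝ} {N : ℕ} (hκ : κ ≤ 1) (hu₁ : 0 ≤ u 1)
    (hu : ∀ t, 1 ≤ t → t < N → u (t + 1) ≤ (1 - κ) * u t) :
    ∀ t, 1 ≤ t → t < N → u (t + 1) ≤ u 1 * exp (-(κ * t)) := by
  have hκ' : 0 ≤ 1 - κ := sub_nonneg.2 hκ
  have hgeom : ∀ t, 1 ≤ t → t < N → u (t + 1) ≤ (1 - κ) ^ t * u 1 := by
    intro t ht htN
    induction t, ht using Nat.le_induction with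
    | base => simpa using hu 1 le_rfl htN
    | succ t ht ih =>
      calc u (t + 1 + 1) ≤ (1 - κ) * u (t + 1) := hu (t + 1) (by omega) htN
        _ ≤ (1 - κ) * ((1 - κ) ^ t * u 1) := by gcongr; exact ih (by omega)
        _ = (1 - κ) ^ (t + 1) * u 1 := by ring
  intro t ht htN
  calc u (t + 1) ≤ (1 - κ) ^ t * u 1 := hgeom t ht htN
    _ ≤ exp (-κ) ^ t * u 1 := by gcongr; exact one_sub_le_exp_neg κ
    _ = u 1 * exp (-(κ * t)) := by rw [← exp_nat_mul, mul_comm]; ring_nf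

theorem static_lgd_exponential_convergence_general
    (α β : ℝ) (hα : 0 < α) (hαβ : α ≤ β)
    (f : ℝ → ℝ)
    (hsc : ∀ x y : ℝ, f y ≥ f x + deriv f x * (y - x) + α / 2 * (y - x) ^ 2)
    (hsm : ∀ x y : ℝ, f y ≤ f x + deriv f x * (y - x) + β / 2 * (y - x) ^ 2)
    (xs : ℝ) (hxs : deriv f xs = 0)
    (δ γ ε : ℝ) (hδ : 0 < δ) (hγ : 1 < γ) (hεδ : ε ≤ α * δ ^ 2 / 4)
    (N : ℕ) (x : ℕ → ℝ)
    (A B : ℕ → ℝ)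
    (hA : ∀ t : ℕ, 1 ≤ t → |A t - f (x t)| ≤ ε / 2)
    (hB : ∀ t : ℕ, 1 ≤ t → |B t - f (x t - δ)| ≤ ε / 2)
    (hstep : ∀ t : ℕ, 1 ≤ t → t < N →
      -(1 / β) * ((A t - B t + ε) / δ) ≥ (1 + γ) * δ ∧
      x (t + 1) = x t - (1 / β) * ((A t - B t + ε) / δ) - δ)
    (c : ℝ) (hc : c = 1 / (2 * β) - 1 / ((1 + γ) * β)) :
    ∀ t : ℕ, 1 ≤ t → t < N →
      f (x (t + 1)) - f xs ≤ (f (x 1) - f xs) * Real.exp (-(2 * α * c * t)) := by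
  have hβ : 0 < β := hα.trans_le hαβ
  have hrate : 2 * α * c ≤ 1 := by
    rw [hc, mul_sub, show 2 * α * (1 / (2 * β)) = α / β by field_simp]
    linarith [(div_le_one hβ).2 hαβ, show 0 ≤ 2 * α * (1 / ((1 + γ) * β)) by positivity]
  refine le_mul_exp_neg_of_le_one_sub_mul (u := fun t => f (x t) - f xs) hrate
    (sub_nonneg.2 (le_of_deriv_eq_zero_of_strongConvex hα.le hsc hxs _)) fun t ht htN => ?_
  obtain ⟨hlarge, hnext⟩ := hstep t ht htN
  rw [hnext]
  exact gap_step_le hα hβ hγ.le hδ hεδ hsc hsm hc (hA t ht) (hB t ht) hlarge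

/-- Exponential convergence of Static Lagged Gradient Descent
under the accuracy event: with the same iteration as in the monotonicity claim,
the optimality gap `h_t = f(x_t) - f(x*)` satisfies
`h_{t+1} ≤ h_1 · exp(-2αc·t)` with `c = 1/(2β) - 1/((1+γ)β)`. -/
theorem static_lgd_exponential_convergence
    (α β : ℝ) (hα : 0 < α) (hαβ : α ≤ β)
    (f : ℝ → ℝ) (hf : Differentiable ℝ f)
    (hsc : ∀ x y : ℝ, f y ≥ f x + deriv f x * (y - x) + α / 2 * (y - x) ^ 2)
    (hsm : ∀ x y : ℝ, f y ≤ f x + deriv f x * (y - x) + β / 2 * (y - x) ^ 2)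
    (xs : ℝ) (hxs : deriv f xs = 0)
    (δ γ ε : ℝ) (hδ : 0 < δ) (hγ : 1 < γ) (hε : 0 < ε) (hεδ : ε ≤ α * δ ^ 2 / 4)
    (N : ℕ) (x : ℕ → ℝ) (hx1 : x 1 ≤ xs)
    (A B : ℕ → ℝ)
    (hA : ∀ t : ℕ, 1 ≤ t → |A t - f (x t)| ≤ ε / 2)
    (hB : ∀ t : ℕ, 1 ≤ t → |B t - f (x t - δ)| ≤ ε / 2)
    (hstep : ∀ t : ℕ, 1 ≤ t → t < N →
      -(1 / β) * ((A t - B t + ε) / δ) ≥ (1 + γ) * δ ∧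
      x (t + 1) = x t - (1 / β) * ((A t - B t + ε) / δ) - δ)
    (c : ℝ) (hc : c = 1 / (2 * β) - 1 / ((1 + γ) * β)) :
    ∀ t : ℕ, 1 ≤ t → t < N →
      f (x (t + 1)) - f xs ≤ (f (x 1) - f xs) * Real.exp (-(2 * α * c * t)) :=
  static_lgd_exponential_convergence_general α β hα hαβ f hsc hsm xs hxs δ γ ε hδ hγ hεδ N x A B hA
    hB hstep c hc
end

section
/- Let 0 < α ≤ β, let f : ℝ → ℝ be differentiable, α-strongly convex, and β-smooth, let x ∈ ℝ, δ > 0, and γ > 1, and let g, g' ∈ ℝ satisfy g ≤ f'(x) and f'(x − δ) ≤ g'. If −(1/β)·g' ≥ (2 + γ)·δ, then −(1/β)·g ≥ (1 + γ)·δ; consequently x − (1/β)·g − 2δ ≥ x + (γ − 1)δ > x, i.e. a lagged jump of the form x ↦ x − (1/β)·g − 2δ does not violate monotonicity. -/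
/-! β-smoothness makes `f'` one-sided β-Lipschitz, so `g ≤ f'(x) ≤ f'(x - δ) + βδ ≤ g' + βδ`;
multiplying by `-1/β` turns the jump condition `-(1/β)·g' ≥ (2 + γ)δ` into `-(1/β)·g ≥ (1 + γ)δ`,
at the cost of exactly one `δ`. -/

section QuadraticUpperBound

variable {β : ℝ} {f : ℝ → ℝ}

theorem sub_deriv_mul_sub_le_of_quadratic_upper_bound
    (hsm : ∀ x y : ℝ, f y ≤ f x + deriv f x * (y - x) + β / 2 * (y - x) ^ 2) (x y : ℝ) :
    (deriv f y - deriv f x) * (y - x) ≤ β * (y - x) ^ 2 := by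
  linear_combination hsm x y + hsm y x

theorem deriv_le_deriv_sub_add_mul_of_quadratic_upper_bound
    (hsm : ∀ x y : ℝ, f y ≤ f x + deriv f x * (y - x) + β / 2 * (y - x) ^ 2)
    {δ : ℝ} (hδ : 0 < δ) (x : ℝ) :
    deriv f x ≤ deriv f (x - δ) + β * δ := by
  have h := sub_deriv_mul_sub_le_of_quadratic_upper_bound hsm (x - δ) x
  rw [sub_sub_cancel] at h
  have h' : (deriv f x - deriv f (x - δ)) * δ ≤ (β * δ) * δ := by linarith
  linarith [le_of_mul_le_mul_right h' hδ]

end QuadraticUpperBound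

theorem neg_one_div_mul_ge_sub_of_le_add {β g g' δ c : ℝ} (hβ : 0 < β)
    (hgg' : g ≤ g' + β * δ) (hg' : -(1 / β) * g' ≥ c) :
    -(1 / β) * g ≥ c - δ := by
  calc -(1 / β) * g ≥ -(1 / β) * (g' + β * δ) :=
        mul_le_mul_of_nonpos_left hgg' (neg_nonpos.mpr (one_div_pos.mpr hβ).le)
    _ = -(1 / β) * g' - δ := by field_simp; ring
    _ ≥ c - δ := by linarith

theorem adaptive_lgd_step_monotone_general
    (α β : ℝ) (hα : 0 < α) (hαβ : α ≤ β)
    (f : ℝ → ℝ)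
    (hsm : ∀ x y : ℝ, f y ≤ f x + deriv f x * (y - x) + β / 2 * (y - x) ^ 2)
    (x δ γ : ℝ) (hδ : 0 < δ) (hγ : 1 < γ)
    (g g' : ℝ) (hg : g ≤ deriv f x) (hg' : deriv f (x - δ) ≤ g')
    (hjump : -(1 / β) * g' ≥ (2 + γ) * δ) :
    -(1 / β) * g ≥ (1 + γ) * δ ∧
    x - (1 / β) * g - 2 * δ ≥ x + (γ - 1) * δ ∧
    x < x - (1 / β) * g - 2 * δ := by
  have hβ : 0 < β := hα.trans_le hαβ
  have hgg' : g ≤ g' + β * δ := by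
    linarith [deriv_le_deriv_sub_add_mul_of_quadratic_upper_bound hsm hδ x]
  have hgap : -(1 / β) * g ≥ (1 + γ) * δ := by
    linarith [neg_one_div_mul_ge_sub_of_le_add hβ hgg' hjump]
  have hstep : 0 < (γ - 1) * δ := mul_pos (sub_pos.mpr hγ) hδ
  exact ⟨hgap, by linarith, by linarith⟩

/-- Per-step monotonicity for Adaptive Lagged Gradient
Descent: if `g ≤ f'(x)`, `f'(x - δ) ≤ g'`, and the jump condition
`-(1/β)·g' ≥ (2+γ)δ` holds, then `-(1/β)·g ≥ (1+γ)δ`, hence the lagged jump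
`x ↦ x - (1/β)·g - 2δ` moves strictly forward: it lands at or above
`x + (γ-1)δ > x`. -/
theorem adaptive_lgd_step_monotone
    (α β : ℝ) (hα : 0 < α) (hαβ : α ≤ β)
    (f : ℝ → ℝ) (hf : Differentiable ℝ f)
    (hsc : ∀ x y : ℝ, f y ≥ f x + deriv f x * (y - x) + α / 2 * (y - x) ^ 2)
    (hsm : ∀ x y : ℝ, f y ≤ f x + deriv f x * (y - x) + β / 2 * (y - x) ^ 2)
    (x δ γ : ℝ) (hδ : 0 < δ) (hγ : 1 < γ)
    (g g' : ℝ) (hg : g ≤ deriv f x) (hg' : deriv f (x - δ) ≤ g')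
    (hjump : -(1 / β) * g' ≥ (2 + γ) * δ) :
    -(1 / β) * g ≥ (1 + γ) * δ ∧
    x - (1 / β) * g - 2 * δ ≥ x + (γ - 1) * δ ∧
    x < x - (1 / β) * g - 2 * δ :=
  adaptive_lgd_step_monotone_general α β hα hαβ f hsm x δ γ hδ hγ g g' hg hg' hjump
end

section
/- Let 0 < α ≤ β, let f : ℝ → ℝ be differentiable, α-strongly convex, and β-smooth, and let x* ∈ ℝ satisfy f'(x*) = 0. Fix δ > 0 and γ > 1, let x ≤ x*, let x̄ ∈ [x − δ, x], and set g = f'(x̄). Suppose −(1/β)·g ≥ (1 + γ)·δ, and let y = x − (1/β)·g − δ. Then, with c = 1/(2β) − 1/((1 + γ)β), we have f(y) − f(x*) ≤ (1 − 2αc)·(f(x) − f(x*)), and moreover 0 < 1 − 2αc < 1. -/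
/-!
Smoothness makes `f'` one-sidedly `β`-Lipschitz, so the lagged gradient gives `f'(x) ≤ g + βδ`.
Hence the jump `y = x - g/β - δ` is a step of length `s = y - x ≥ 0` with `f'(x) ≤ -βs`, and
smoothness gives `f(y) ≤ f(x) - βs²/2`; the step condition `-g/β ≥ (1 + γ)δ` keeps
`βs²/2 ≥ c g²`. Since `f'(x) ≤ 0`, the gap at `x` is at most the gap at `x̄`, which the
Polyak–Łojasiewicz inequality of strong convexity bounds by `g² / (2α)`.
-/

def HasQuadraticUpperBound (β : ℝ) (f : ℝ → ℝ) : Prop :=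
  ∀ x y : ℝ, f y ≤ f x + deriv f x * (y - x) + β / 2 * (y - x) ^ 2

def HasQuadraticLowerBound (α : ℝ) (f : ℝ → ℝ) : Prop :=
  ∀ x y : ℝ, f y ≥ f x + deriv f x * (y - x) + α / 2 * (y - x) ^ 2

namespace HasQuadraticUpperBound

variable {β : ℝ} {f : ℝ → ℝ}

theorem deriv_le_add_of_le (hf : HasQuadraticUpperBound β f) {a b : ℝ} (hab : a ≤ b) :
    deriv f b ≤ deriv f a + β * (b - a) := by
  rcases hab.eq_or_lt with rfl | hlt
  · simp
  have hsum : (deriv f b - deriv f a) * (b - a) ≤ β * (b - a) * (b - a) := by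
    nlinarith [hf a b, hf b a]
  linarith [le_of_mul_le_mul_right hsum (sub_pos.mpr hlt)]

theorem le_sub_of_deriv_le (hf : HasQuadraticUpperBound β f) {x y : ℝ} (hxy : x ≤ y)
    (hd : deriv f x ≤ -β * (y - x)) : f y ≤ f x - β / 2 * (y - x) ^ 2 := by
  nlinarith [hf x y, mul_le_mul_of_nonneg_right hd (sub_nonneg.mpr hxy)]

end HasQuadraticUpperBound

namespace HasQuadraticLowerBound

variable {α : ℝ} {f : ℝ → ℝ}

theorem le_of_le_of_deriv_nonpos (hf : HasQuadraticLowerBound α f) (hα : 0 ≤ α) {a b : ℝ}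
    (hab : a ≤ b) (hd : deriv f b ≤ 0) : f b ≤ f a := by
  nlinarith [hf b a, mul_nonneg (neg_nonneg.mpr hd) (sub_nonneg.mpr hab), sq_nonneg (a - b)]

/-- The Polyak–Łojasiewicz inequality. -/
theorem two_mul_sub_le_deriv_sq (hf : HasQuadraticLowerBound α f) (hα : 0 < α) (x z : ℝ) :
    2 * α * (f x - f z) ≤ deriv f x ^ 2 := by
  nlinarith [hf x z, sq_nonneg (α * (z - x) + deriv f x)]

end HasQuadraticLowerBound

section StepCoefficient

variable {α β γ : ℝ}

theorem step_coeff_pos (hβ : 0 < β) (hγ : 1 < γ) : 0 < 1 / (2 * β) - 1 / ((1 + γ) * β) := by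
  have : 1 / ((1 + γ) * β) < 1 / (2 * β) :=
    one_div_lt_one_div_of_lt (by positivity) (by nlinarith)
  linarith

theorem two_mul_mul_step_coeff_lt_one (hβ : 0 < β) (hαβ : α ≤ β) (hγ : 1 < γ) :
    2 * α * (1 / (2 * β) - 1 / ((1 + γ) * β)) < 1 := by
  have hc := step_coeff_pos hβ hγ
  have h2βc : 2 * β * (1 / (2 * β) - 1 / ((1 + γ) * β)) = 1 - 2 / (1 + γ) := by
    field_simp
  have : 0 < 2 / (1 + γ) := by positivity
  nlinarith

theorem step_coeff_mul_sq_le (hβ : 0 < β) (hγ : 0 ≤ γ) {g δ : ℝ} (hδ : 0 ≤ δ)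
    (hstep : (1 + γ) * δ ≤ -(1 / β) * g) :
    (1 / (2 * β) - 1 / ((1 + γ) * β)) * g ^ 2 ≤ β / 2 * (-(1 / β) * g - δ) ^ 2 := by
  set u := -(1 / β) * g with hu
  have hg : g = -β * u := by rw [hu]; field_simp
  have hlhs : (1 / (2 * β) - 1 / ((1 + γ) * β)) * g ^ 2
      = β / 2 * ((γ - 1) / (1 + γ) * u ^ 2) := by
    rw [hg]; field_simp; ring
  rw [hlhs]
  gcongr
  -- `(γ - 1)(1 + γ) u² ≤ (γ u)² ≤ ((1 + γ)(u - δ))²`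
  have hγu : γ * u ≤ (1 + γ) * (u - δ) := by linarith
  have hγu_nonneg : 0 ≤ γ * u := mul_nonneg hγ (by nlinarith)
  rw [div_mul_eq_mul_div, div_le_iff₀ (by positivity)]
  nlinarith [mul_le_mul hγu hγu hγu_nonneg (hγu_nonneg.trans hγu)]

end StepCoefficient

theorem lgd_step_contraction_general
    (α β : ℝ) (hα : 0 < α) (hαβ : α ≤ β)
    (f : ℝ → ℝ)
    (hsc : ∀ x y : ℝ, f y ≥ f x + deriv f x * (y - x) + α / 2 * (y - x) ^ 2)
    (hsm : ∀ x y : ℝ, f y ≤ f x + deriv f x * (y - x) + β / 2 * (y - x) ^ 2)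
    (xs : ℝ)
    (δ γ : ℝ) (hγ : 1 < γ)
    (x : ℝ)
    (xbar : ℝ) (hxbar : xbar ∈ Set.Icc (x - δ) x)
    (g : ℝ) (hg : g = deriv f xbar)
    (hstep : -(1 / β) * g ≥ (1 + γ) * δ)
    (y : ℝ) (hy : y = x - (1 / β) * g - δ)
    (c : ℝ) (hc : c = 1 / (2 * β) - 1 / ((1 + γ) * β)) :
    f y - f xs ≤ (1 - 2 * α * c) * (f x - f xs) ∧
    0 < 1 - 2 * α * c ∧ 1 - 2 * α * c < 1 := by
  have hβ : 0 < β := hα.trans_le hαβ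
  obtain ⟨hxbar_ge, hxbar_le⟩ := hxbar
  have hδ : 0 ≤ δ := by linarith
  have hc_pos : 0 < c := hc ▸ step_coeff_pos hβ hγ
  have hjump : -β * (y - x) = g + β * δ := by rw [hy]; field_simp; ring
  have hjump_nonneg : 0 ≤ y - x := by
    rw [hy]; nlinarith [mul_nonneg hδ (by linarith : (0 : ℝ) ≤ γ)]
  have hlag : deriv f x ≤ -β * (y - x) := by
    rw [hjump, hg]
    linarith [HasQuadraticUpperBound.deriv_le_add_of_le hsm hxbar_le, mul_le_mul_of_nonneg_left
      (by linarith : x - xbar ≤ δ) hβ.le]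
  have hdescent : f y ≤ f x - β / 2 * (y - x) ^ 2 :=
    HasQuadraticUpperBound.le_sub_of_deriv_le hsm (sub_nonneg.mp hjump_nonneg) hlag
  have hgap : f x ≤ f xbar :=
    HasQuadraticLowerBound.le_of_le_of_deriv_nonpos hsc hα.le hxbar_le
      (by linarith [mul_nonneg hβ.le hjump_nonneg])
  have hPL := HasQuadraticLowerBound.two_mul_sub_le_deriv_sq hsc hα xbar xs
  rw [← hg] at hPL
  have hdecrease : c * g ^ 2 ≤ β / 2 * (y - x) ^ 2 := by
    rw [hc, hy]
    convert step_coeff_mul_sq_le hβ (by linarith) hδ hstep using 2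
    ring
  have hrate : 2 * α * c < 1 := hc ▸ two_mul_mul_step_coeff_lt_one hβ hαβ hγ
  refine ⟨?_, by linarith, sub_lt_self 1 (by positivity)⟩
  nlinarith [mul_le_mul_of_nonneg_left hPL hc_pos.le,
    mul_le_mul_of_nonneg_left hgap (by positivity : 0 ≤ 2 * α * c)]

/-- Per-step contraction of the lagged gradient-descent jump:
if `x ≤ x*`, `g = f'(x̄)` for some `x̄ ∈ [x - δ, x]`, the step condition
`-(1/β)·g ≥ (1+γ)δ` holds, and `y = x - (1/β)·g - δ`, then the optimality gap
contracts: `f(y) - f(x*) ≤ (1 - 2αc)(f(x) - f(x*))` with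
`c = 1/(2β) - 1/((1+γ)β)`, and `0 < 1 - 2αc < 1`. -/
theorem lgd_step_contraction
    (α β : ℝ) (hα : 0 < α) (hαβ : α ≤ β)
    (f : ℝ → ℝ) (hf : Differentiable ℝ f)
    (hsc : ∀ x y : ℝ, f y ≥ f x + deriv f x * (y - x) + α / 2 * (y - x) ^ 2)
    (hsm : ∀ x y : ℝ, f y ≤ f x + deriv f x * (y - x) + β / 2 * (y - x) ^ 2)
    (xs : ℝ) (hxs : deriv f xs = 0)
    (δ γ : ℝ) (hδ : 0 < δ) (hγ : 1 < γ)
    (x : ℝ) (hx : x ≤ xs)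
    (xbar : ℝ) (hxbar : xbar ∈ Set.Icc (x - δ) x)
    (g : ℝ) (hg : g = deriv f xbar)
    (hstep : -(1 / β) * g ≥ (1 + γ) * δ)
    (y : ℝ) (hy : y = x - (1 / β) * g - δ)
    (c : ℝ) (hc : c = 1 / (2 * β) - 1 / ((1 + γ) * β)) :
    f y - f xs ≤ (1 - 2 * α * c) * (f x - f xs) ∧
    0 < 1 - 2 * α * c ∧ 1 - 2 * α * c < 1 :=
  lgd_step_contraction_general α β hα hαβ f hsc hsm xs δ γ hγ x xbar hxbar g hg hstep y hy c hc
end
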